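/- Let p = 3 and X_1 = X_2 = X_3 = {0,1}. Let M be the set of strictly positive probability mass functions P on {0,1}³ such that P(X_3 = x | X_1 = 0, X_2 = 0) = P(X_3 = x | X_1 = 1, X_2 = 1) for all x ∈ {0,1}. Then there is no directed acyclic graph G on vertex set {1,2,3} whose Bayesian network model M_G equals M. (M is a staged tree model that is not equivalent to any Bayesian network.) -/

import Mathlib

/-!
Encoding: joint probability mass functions of three binary variables
`(X_1, X_2, X_3)` are real-valued functions on `Fin 3 → Bool`.  A depth-(i-1)
vertex (context `v ∈ X_1 × … × X_{i-1}`) is represented by a full assignment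
of which only the coordinates `k < i` are relevant.
-/

/-- `v` and `w` agree on all coordinates below `i`. -/
def agreeBelow (i : Fin 3) (v w : Fin 3 → Bool) : Prop :=
  ∀ k : Fin 3, k < i → v k = w k

open Classical in
/-- The conditional probability `P(X_i = x | (X_1,…,X_{i-1}) = v)`: the ratio of the
marginal of `(X_1,…,X_i)` at `(v, x)` to the marginal of `(X_1,…,X_{i-1})` at `v`. -/
noncomputable def condProb (P : (Fin 3 → Bool) → ℝ) (i : Fin 3) (v : Fin 3 → Bool)
    (x : Bool) : ℝ :=
  (∑ u : Fin 3 → Bool, if agreeBelow i u v ∧ u i = x then P u else 0) /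
    (∑ u : Fin 3 → Bool, if agreeBelow i u v then P u else 0)

open Classical in
/-- The marginal `P(X_A = v_A)` of the coordinates in the finite set `A` at `v`. -/
noncomputable def margSet (P : (Fin 3 → Bool) → ℝ) (A : Finset (Fin 3))
    (v : Fin 3 → Bool) : ℝ :=
  ∑ u : Fin 3 → Bool, if ∀ k ∈ A, u k = v k then P u else 0

/-- `P` is Markov to the DAG `G` with parent map `Par` (with `Par i ⊆ {1,2,3} \ {i}`):
`P x = ∏ i, P(X_i = x_i | X_{Par i} = x_{Par i})` for all `x`, where the conditional
probabilities are ratios of the corresponding marginals. -/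
noncomputable def Markov (Par : Fin 3 → Finset (Fin 3))
    (P : (Fin 3 → Bool) → ℝ) : Prop :=
  ∀ x : Fin 3 → Bool,
    P x = ∏ i : Fin 3, margSet P (insert i (Par i)) x / margSet P (Par i) x

/-!
A complete DAG imposes no constraint: along a topological order the Markov factors telescope
(chain rule), so every positive distribution is Markov to it, while `M` is a proper submodel.
If the DAG leaves two vertices `i`, `j` non-adjacent, let `k` be the third one. Either `k` is a
collider `i → k ← j`, and the factorisation forces `X_i ⊥ X_j`, or it splits as
`F(x_i, x_k) · H(x_j, x_k)`, which forces `X_i ⊥ X_j | X_k`. The distribution `pIn` lies in `M`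
but satisfies none of these six independence statements.
-/

open Finset Function

lemma mul_eq_mul_update_of_dependsOn {ι α M : Type*} [DecidableEq ι] [CommMonoid M]
    {P F H : (ι → α) → M} {i j k : ι} (hij : i ≠ j) (hjk : j ≠ k)
    (hF : DependsOn F {i, k}) (hH : DependsOn H {j, k}) (hP : ∀ z, P z = F z * H z)
    {x y : ι → α} (hxy : x k = y k) :
    P x * P y = P (update x j (y j)) * P (update y j (x j)) := by
  have agree_ik {x y : ι → α} : ∀ l ∈ ({i, k} : Set ι), update x j (y j) l = x l := by
    rintro l (rfl | rfl)
    exacts [update_of_ne hij _ _, update_of_ne hjk.symm _ _]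
  have agree_jk {x y : ι → α} (hxy : x k = y k) :
      ∀ l ∈ ({j, k} : Set ι), update x j (y j) l = y l := by
    rintro l (rfl | rfl)
    exacts [update_self _ _ _, (update_of_ne hjk.symm _ _).trans hxy]
  rw [hP, hP, hP, hP, hF agree_ik, hF agree_ik, hH (agree_jk hxy), hH (agree_jk hxy.symm)]
  ac_rfl

lemma Fin.eq_or_eq_or_eq_of_ne {i j k : Fin 3} (hij : i ≠ j) (hik : i ≠ k) (hjk : j ≠ k)
    (l : Fin 3) : l = i ∨ l = j ∨ l = k := by
  omega

lemma Fin.exists_ne_ne (i j : Fin 3) : ∃ k, i ≠ k ∧ j ≠ k := by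
  revert i j; decide

lemma Fin.prod_univ_three_of_ne {M : Type*} [CommMonoid M] {i j k : Fin 3} (hij : i ≠ j)
    (hik : i ≠ k) (hjk : j ≠ k) (f : Fin 3 → M) : ∏ l, f l = f i * f j * f k := by
  have huniv : (univ : Finset (Fin 3)) = {i, j, k} := by
    ext l; simpa using Fin.eq_or_eq_or_eq_of_ne hij hik hjk l
  rw [huniv, prod_insert (by simp [hij, hik]), prod_pair hjk, mul_assoc]

lemma sum_fin_three_bool {M : Type*} [AddCommMonoid M] (f : (Fin 3 → Bool) → M) :
    ∑ u, f u =
      f ![false, false, false] + f ![false, false, true] + f ![false, true, false] +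
      f ![false, true, true] + f ![true, false, false] + f ![true, false, true] +
      f ![true, true, false] + f ![true, true, true] := by
  rw [show (univ : Finset (Fin 3 → Bool)) =
      {![false, false, false], ![false, false, true], ![false, true, false], ![false, true, true],
       ![true, false, false], ![true, false, true], ![true, true, false], ![true, true, true]}
    by decide]
  rw [sum_insert (by decide), sum_insert (by decide), sum_insert (by decide),
    sum_insert (by decide), sum_insert (by decide), sum_insert (by decide),
    sum_insert (by decide), sum_singleton]
  simp only [add_assoc]

lemma Fin.subset_singleton_of_notMem {S : Finset (Fin 3)} {a b c : Fin 3} (hab : a ≠ b)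
    (hac : a ≠ c) (hbc : b ≠ c) (ha : a ∉ S) (hb : b ∉ S) : S ⊆ {c} := fun l hl => by
  rcases Fin.eq_or_eq_or_eq_of_ne hab hac hbc l with rfl | rfl | rfl <;> simp_all

lemma coe_insert_subset_pair {α : Type*} [DecidableEq α] {S : Finset α} {a b : α}
    (h : S ⊆ {b}) : (↑(insert a S) : Set α) ⊆ {a, b} := by
  simpa using coe_subset.2 (insert_subset_insert a h)

section Marginals

variable (P : (Fin 3 → Bool) → ℝ)

lemma margSet_univ (x : Fin 3 → Bool) : margSet P univ x = P x := by
  rw [margSet, Fintype.sum_eq_single x]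
  · simp
  · intro u hu
    simp [← funext_iff, hu]

lemma margSet_empty (x : Fin 3 → Bool) : margSet P ∅ x = ∑ u, P u := by
  simp [margSet]

variable {P}

lemma margSet_pos (hP : ∀ x, 0 < P x) (A : Finset (Fin 3)) (x : Fin 3 → Bool) :
    0 < margSet P A x :=
  sum_pos' (fun u _ => by split_ifs <;> simp [(hP u).le]) ⟨x, mem_univ x, by simp [hP x]⟩

lemma dependsOn_margSet (A : Finset (Fin 3)) : DependsOn (margSet P A) A := by
  intro x y hxy
  simp only [margSet]
  refine sum_congr rfl fun u _ => if_congr ?_ rfl rfl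
  exact forall₂_congr fun k hk => by rw [hxy k hk]

end Marginals

def MargIndep (P : (Fin 3 → Bool) → ℝ) (i j : Fin 3) : Prop :=
  ∀ x, margSet P {i, j} x = margSet P {i} x * margSet P {j} x

/-- `X_j ⊥ X_i | X_k` in cross-ratio form, `i` being the remaining coordinate. -/
def CondIndep (P : (Fin 3 → Bool) → ℝ) (j k : Fin 3) : Prop :=
  ∀ x y : Fin 3 → Bool, x k = y k → P x * P y = P (update x j (y j)) * P (update y j (x j))

noncomputable def markovFactor (P : (Fin 3 → Bool) → ℝ) (Par : Fin 3 → Finset (Fin 3))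
    (l : Fin 3) (x : Fin 3 → Bool) : ℝ :=
  margSet P (insert l (Par l)) x / margSet P (Par l) x

section Markov

variable {Par : Fin 3 → Finset (Fin 3)} {P : (Fin 3 → Bool) → ℝ}

lemma Markov.eq_prod_markovFactor (hM : Markov Par P) (x : Fin 3 → Bool) :
    P x = ∏ l, markovFactor P Par l x :=
  hM x

lemma dependsOn_markovFactor (l : Fin 3) :
    DependsOn (markovFactor P Par l) (insert l (Par l) : Finset (Fin 3)) := fun x y h => by
  rw [markovFactor, markovFactor, dependsOn_margSet _ h,
    dependsOn_margSet _ fun k hk => h k (mem_insert_of_mem hk)]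

variable {π : Equiv.Perm (Fin 3)}

lemma notMem_parents_self (hπ : ∀ i, ∀ j ∈ Par i, π.symm j < π.symm i) (i : Fin 3) :
    i ∉ Par i :=
  fun h => lt_irrefl _ (hπ i i h)

lemma notMem_parents_of_mem (hπ : ∀ i, ∀ j ∈ Par i, π.symm j < π.symm i) {i j : Fin 3}
    (h : j ∈ Par i) : i ∉ Par j :=
  fun h' => lt_asymm (hπ i j h) (hπ j i h')

lemma markov_of_complete (hπ : ∀ i, ∀ j ∈ Par i, π.symm j < π.symm i)
    (hcomplete : ∀ i j, i ≠ j → i ∈ Par j ∨ j ∈ Par i) (hP : ∀ x, 0 < P x)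
    (hsum : ∑ x, P x = 1) : Markov Par P := by
  have hPar (m : Fin 3) : Par (π m) = univ.filter fun j => π.symm j < m := by
    ext j
    simp only [mem_filter, mem_univ, true_and]
    refine ⟨fun h => by simpa using hπ _ j h, fun h => ?_⟩
    have hne : π m ≠ j := by rintro rfl; simp at h
    exact (hcomplete _ _ hne).resolve_left fun h' => lt_asymm h (by simpa using hπ j _ h')
  have h0 : Par (π 0) = ∅ := by
    rw [hPar]; ext j; simp
  have h1 : Par (π 1) = {π 0} := by
    rw [hPar]; ext j
    simp only [mem_filter, mem_univ, true_and, mem_singleton, ← Equiv.symm_apply_eq]; omega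
  have h2 : Par (π 2) = {π 0, π 1} := by
    rw [hPar]; ext j
    simp only [mem_filter, mem_univ, true_and, mem_insert, mem_singleton,
      ← Equiv.symm_apply_eq]
    omega
  have h3 : insert (π 2) {π 0, π 1} = univ := by
    ext j; simp only [mem_univ, mem_insert, mem_singleton, ← Equiv.symm_apply_eq, iff_true]; omega
  intro x
  rw [← Equiv.prod_comp π, Fin.prod_univ_three, h0, h1, h2, insert_empty, pair_comm, h3,
    margSet_univ, margSet_empty, hsum]
  have := margSet_pos hP {π 0} x
  have := margSet_pos hP {π 0, π 1} x
  field_simp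

variable {i j k : Fin 3}

/-- The factor of the collider `k` is `P x / P(x_i, x_j)`, so `P x` cancels. -/
lemma margIndep_of_markov_collider (hij : i ≠ j) (hik : i ≠ k) (hjk : j ≠ k) (hi : Par i = ∅)
    (hj : Par j = ∅) (hk : Par k = {i, j}) (hP : ∀ x, 0 < P x) (hsum : ∑ x, P x = 1)
    (hM : Markov Par P) : MargIndep P i j := by
  intro x
  have hunivk : insert k {i, j} = (univ : Finset (Fin 3)) := by
    ext l; simpa [or_comm, or_left_comm] using Fin.eq_or_eq_or_eq_of_ne hij hik hjk l
  have hx := hM.eq_prod_markovFactor x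
  simp only [Fin.prod_univ_three_of_ne hij hik hjk, markovFactor, hi, hj, hk, hunivk,
    insert_empty, margSet_univ, margSet_empty, hsum, div_one] at hx
  have := margSet_pos hP {i, j} x
  field_simp at hx
  exact mul_right_cancel₀ (hP x).ne' (by linarith)

lemma condIndep_of_markov (hij : i ≠ j) (hik : i ≠ k) (hjk : j ≠ k) (hi : Par i ⊆ {k})
    (hj : Par j ⊆ {k}) (hk : Par k ⊆ {i}) (hM : Markov Par P) : CondIndep P j k := by
  have hF : DependsOn (markovFactor P Par i * markovFactor P Par k) {i, k} := fun x y h => by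
    simp only [Pi.mul_apply]
    rw [(dependsOn_markovFactor i).mono (coe_insert_subset_pair hi) h,
      (dependsOn_markovFactor k).mono (Set.pair_comm k i ▸ coe_insert_subset_pair hk) h]
  have hH : DependsOn (markovFactor P Par j) {j, k} :=
    (dependsOn_markovFactor j).mono (coe_insert_subset_pair hj)
  intro x y hxy
  refine mul_eq_mul_update_of_dependsOn hij hjk hF hH (fun z => ?_) hxy
  rw [hM.eq_prod_markovFactor, Fin.prod_univ_three_of_ne hij hik hjk, Pi.mul_apply,
    mul_right_comm]

lemma margIndep_or_condIndep_of_markov (hπ : ∀ i, ∀ j ∈ Par i, π.symm j < π.symm i)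
    (hij : i ≠ j) (hik : i ≠ k) (hjk : j ≠ k) (hi : i ∉ Par j) (hj : j ∉ Par i)
    (hP : ∀ x, 0 < P x) (hsum : ∑ x, P x = 1) (hM : Markov Par P) :
    MargIndep P i j ∨ CondIndep P j k ∨ CondIndep P i k := by
  have hPi : Par i ⊆ {k} :=
    Fin.subset_singleton_of_notMem hij hik hjk (notMem_parents_self hπ i) hj
  have hPj : Par j ⊆ {k} :=
    Fin.subset_singleton_of_notMem hij.symm hjk hik (notMem_parents_self hπ j) hi
  by_cases hjk' : j ∈ Par k
  · by_cases hik' : i ∈ Par k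
    · refine .inl (margIndep_of_markov_collider hij hik hjk ?_ ?_ ?_ hP hsum hM)
      · exact (subset_singleton_iff.1 hPi).resolve_right fun h =>
          notMem_parents_of_mem hπ hik' (h ▸ mem_singleton_self k)
      · exact (subset_singleton_iff.1 hPj).resolve_right fun h =>
          notMem_parents_of_mem hπ hjk' (h ▸ mem_singleton_self k)
      · refine (subset_insert_iff.2 ?_).antisymm
          (insert_subset hik' (singleton_subset_iff.2 hjk'))
        exact Fin.subset_singleton_of_notMem hik.symm hjk.symm hij
          (fun h => notMem_parents_self hπ k (mem_of_mem_erase h)) (notMem_erase i _)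
    · exact .inr (.inr (condIndep_of_markov hij.symm hjk hik hPj hPi
        (Fin.subset_singleton_of_notMem hik.symm hjk.symm hij (notMem_parents_self hπ k) hik')
        hM))
  · exact .inr (.inl (condIndep_of_markov hij hik hjk hPi hPj
      (Fin.subset_singleton_of_notMem hjk.symm hik.symm hij.symm (notMem_parents_self hπ k) hjk')
      hM))

end Markov

/-- `X_3` is uniform in both contexts `00` and `11`. -/
noncomputable def pIn (u : Fin 3 → Bool) : ℝ :=
  match u 0, u 1, u 2 with
  | false, false, false => 12 / 96
  | false, false, true  => 12 / 96
  | false, true,  false => 16 / 96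
  | false, true,  true  => 8 / 96
  | true,  false, false => 9 / 96
  | true,  false, true  => 3 / 96
  | true,  true,  false => 18 / 96
  | true,  true,  true  => 18 / 96

/-- `P(X_3 = 1 | 00) = 3/5` but `P(X_3 = 1 | 11) = 1/9`. -/
noncomputable def pOut (u : Fin 3 → Bool) : ℝ :=
  match u 0, u 1, u 2 with
  | false, false, false => 2 / 36
  | false, false, true  => 3 / 36
  | false, true,  false => 4 / 36
  | false, true,  true  => 5 / 36
  | true,  false, false => 6 / 36
  | true,  false, true  => 7 / 36
  | true,  true,  false => 8 / 36
  | true,  true,  true  => 1 / 36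

lemma pIn_pos (x : Fin 3 → Bool) : 0 < pIn x := by
  unfold pIn; split <;> norm_num

lemma pOut_pos (x : Fin 3 → Bool) : 0 < pOut x := by
  unfold pOut; split <;> norm_num

lemma sum_pIn : ∑ x, pIn x = 1 := by
  rw [sum_fin_three_bool]; norm_num [pIn, Matrix.cons_val_two]

lemma sum_pOut : ∑ x, pOut x = 1 := by
  rw [sum_fin_three_bool]; norm_num [pOut, Matrix.cons_val_two]

lemma condProb_pIn (x : Bool) :
    condProb pIn 2 (fun _ => false) x = condProb pIn 2 (fun _ => true) x := by
  cases x <;> norm_num [condProb, sum_fin_three_bool, pIn, Matrix.cons_val_two, agreeBelow,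
    Fin.forall_fin_succ, Fin.lt_def]

lemma condProb_pOut :
    condProb pOut 2 (fun _ => false) true ≠ condProb pOut 2 (fun _ => true) true := by
  norm_num [condProb, sum_fin_three_bool, pOut, Matrix.cons_val_two, agreeBelow,
    Fin.forall_fin_succ, Fin.lt_def]

lemma not_margIndep_pIn {i j : Fin 3} (hij : i ≠ j) : ¬ MargIndep pIn i j := by
  intro h
  have := h (fun _ => false)
  fin_cases i <;> fin_cases j <;> (try exact absurd rfl hij) <;>
    norm_num [margSet, sum_fin_three_bool, pIn, Matrix.cons_val_two] at this

lemma not_condIndep_pIn {j k : Fin 3} (hjk : j ≠ k) : ¬ CondIndep pIn j k := by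
  intro h
  have := h (fun _ => false) (update (fun _ => true) k false) (by simp)
  fin_cases j <;> fin_cases k <;> (try exact absurd rfl hjk) <;>
    norm_num [pIn, update, Fin.ext_iff] at this

/--
Let `M` be the set of strictly positive probability mass functions `P` on `{0,1}³`
such that `P(X_3 = x | X_1 = 0, X_2 = 0) = P(X_3 = x | X_1 = 1, X_2 = 1)` for all
`x ∈ {0,1}`.  There is no directed acyclic graph `G` on `{1,2,3}` (given by a
parent map `Par` admitting a topological order `π`) whose Bayesian network model
`M_G` equals `M`: `M` is a staged tree model not equivalent to any Bayesian network.
-/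
theorem no_BN_equals_swap_staged_tree_model :
    ¬ ∃ Par : Fin 3 → Finset (Fin 3),
        (∃ π : Equiv.Perm (Fin 3), ∀ i : Fin 3, ∀ j ∈ Par i, π.symm j < π.symm i) ∧
        (∀ P : (Fin 3 → Bool) → ℝ, (∀ x, 0 < P x) → (∑ x, P x = 1) →
          (Markov Par P ↔
            ∀ x : Bool,
              condProb P 2 (fun _ => false) x = condProb P 2 (fun _ => true) x)) := by
  rintro ⟨Par, ⟨π, hπ⟩, hiff⟩
  by_cases hcomplete : ∀ i j, i ≠ j → i ∈ Par j ∨ j ∈ Par i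
  · exact condProb_pOut ((hiff pOut pOut_pos sum_pOut).1
      (markov_of_complete hπ hcomplete pOut_pos sum_pOut) true)
  push Not at hcomplete
  obtain ⟨i, j, hij, hi, hj⟩ := hcomplete
  obtain ⟨k, hik, hjk⟩ := Fin.exists_ne_ne i j
  have hM : Markov Par pIn := (hiff pIn pIn_pos sum_pIn).2 condProb_pIn
  rcases margIndep_or_condIndep_of_markov hπ hij hik hjk hi hj pIn_pos sum_pIn hM with h | h | h
  exacts [not_margIndep_pIn hij h, not_condIndep_pIn hjk h, not_condIndep_pIn hik h]
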